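/- For all integers n, m, and k with k ≥ 0, the q-Chu–Vandermonde identity ∑_{j=0}^{k} q^{(k-j)(n-j)} · qbinom(n,j) · qbinom(m,k-j) = qbinom(n+m,k) holds for the generalized q-binomial coefficients (valid including negative n and m). -/

import Mathlib

open LaurentPolynomial in
/-- The ordinary Gaussian binomial coefficient as a (Laurent) polynomial in `q = T 1`,
defined by the `q`-Pascal rule; it is `0` when the lower entry exceeds the upper one. -/
noncomputable def gauss : ℕ → ℕ → LaurentPolynomial ℤ
  | _, 0 => 1
  | 0, _ + 1 => 0
  | a + 1, b + 1 => gauss a b + T ((b : ℤ) + 1) * gauss a (b + 1)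

open LaurentPolynomial in
/-- The generalized `q`-binomial coefficient, a Laurent polynomial in `q = T 1`,
extended to arbitrary integer entries. -/
noncomputable def qbinom (n k : ℤ) : LaurentPolynomial ℤ :=
  if 0 ≤ k ∧ k ≤ n then gauss n.toNat k.toNat
  else if n < 0 ∧ 0 ≤ k then
    (-1) ^ k.toNat * T (k * (2 * n - k + 1) / 2) * gauss (k - n - 1).toNat k.toNat
  else if k ≤ n ∧ n < 0 then
    (-1) ^ (n - k).toNat * T ((n * (n + 1) - k * (k + 1)) / 2) *
      gauss (-k - 1).toNat (-n - 1).toNat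
  else 0

/-!
Both sides, viewed as functions `F n k` of `n : ℤ` and `k : ℕ` (with `m` fixed), satisfy the
`q`-Pascal recurrence `F (n + 1) (k + 1) = F n k + q ^ (k + 1) * F n (k + 1)`, equal `1` at
`k = 0`, and equal `qbinom m k` at `n = 0`. Since `q ^ (k + 1)` is a unit, the recurrence can be
run in both directions of `n`, so these boundary values determine `F` everywhere. For the
right-hand side the recurrence is Pascal's rule for `qbinom`, which for negative upper entry is
the second Pascal rule `[a+1, b+1] = q^(a-b) [a, b] + [a, b+1]` of the Gaussian coefficients.
-/

open LaurentPolynomial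

theorem gauss_zero_right (a : ℕ) : gauss a 0 = 1 := by cases a <;> rfl

theorem gauss_succ_succ (a b : ℕ) :
    gauss (a + 1) (b + 1) = gauss a b + T ((b : ℤ) + 1) * gauss a (b + 1) := rfl

theorem gauss_eq_zero_of_lt {a b : ℕ} (h : a < b) : gauss a b = 0 := by
  induction a generalizing b with
  | zero => obtain ⟨b, rfl⟩ := Nat.exists_eq_add_one_of_ne_zero h.ne'; rfl
  | succ a ih =>
    obtain ⟨b, rfl⟩ := Nat.exists_eq_add_one_of_ne_zero (Nat.ne_zero_of_lt h)
    rw [gauss_succ_succ, ih (by omega), ih (by omega), mul_zero, add_zero]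

theorem gauss_self (a : ℕ) : gauss a a = 1 := by
  induction a with
  | zero => rfl
  | succ a ih => rw [gauss_succ_succ, ih, gauss_eq_zero_of_lt a.lt_succ_self, mul_zero, add_zero]

/-- The `q`-analogue of `(b + 1) * choose a (b + 1) = (a - b) * choose a b`. -/
theorem gauss_ratio (a b : ℕ) :
    (T ((b : ℤ) + 1) - 1) * gauss a (b + 1) = (T ((a : ℤ) - b) - 1) * gauss a b := by
  induction a generalizing b with
  | zero =>
    cases b with
    | zero => simp [gauss_eq_zero_of_lt, T_zero]
    | succ b => simp [gauss_eq_zero_of_lt]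
  | succ a ih =>
    cases b with
    | zero =>
      have hT : (T ((a : ℤ) + 1) : ℤ[T;T⁻¹]) = T 1 * T a := by rw [← T_add, add_comm]
      have ih₀ := ih 0
      rw [gauss_succ_succ, gauss_zero_right]
      simp only [gauss_zero_right, Nat.cast_zero, zero_add, sub_zero, mul_one] at ih₀ ⊢
      push_cast
      linear_combination T 1 * ih₀ - hT
    | succ c =>
      have h₁ : (T ((a : ℤ) + 1) : ℤ[T;T⁻¹]) =
          T ((c : ℤ) + 1 + 1) * T (a - (c + 1)) := by
        rw [← T_add]; ring_nf
      have h₂ : (T ((a : ℤ) + 1) : ℤ[T;T⁻¹]) = T ((c : ℤ) + 1) * T (a - c) := by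
        rw [← T_add]; ring_nf
      rw [gauss_succ_succ a (c + 1), gauss_succ_succ a c]
      have ih₁ := ih (c + 1)
      have ih₂ := ih c
      push_cast at ih₁ ih₂ ⊢
      rw [add_sub_add_right_eq_sub]
      linear_combination T ((c : ℤ) + 1 + 1) * ih₁ + ih₂ + gauss a (c + 1) * (h₂ - h₁)

theorem gauss_succ_succ' (a b : ℕ) :
    gauss (a + 1) (b + 1) = T ((a : ℤ) - b) * gauss a b + gauss a (b + 1) := by
  rw [gauss_succ_succ]
  linear_combination gauss_ratio a b

theorem qbinom_of_nonneg {n k : ℤ} (hn : 0 ≤ n) (hk : 0 ≤ k) :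
    qbinom n k = gauss n.toNat k.toNat := by
  unfold qbinom
  rcases le_or_gt k n with h | h
  · rw [if_pos ⟨hk, h⟩]
  · rw [if_neg (by omega), if_neg (by omega), if_neg (by omega),
      gauss_eq_zero_of_lt (by omega)]

theorem qbinom_of_nonpos {n k : ℤ} (hn : n ≤ 0) (hk : 0 ≤ k) :
    qbinom n k =
      (-1) ^ k.toNat * T (k * (2 * n - k + 1) / 2) * gauss (k - n - 1).toNat k.toNat := by
  rcases hn.lt_or_eq with hn | rfl
  · unfold qbinom
    rw [if_neg (by omega), if_pos ⟨hn, hk⟩]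
  rw [qbinom_of_nonneg le_rfl hk]
  rcases hk.lt_or_eq with hk | rfl
  · rw [gauss_eq_zero_of_lt (by omega), gauss_eq_zero_of_lt (by omega), mul_zero]
  · simp [gauss_zero_right, T_zero]

theorem qbinom_zero_right (n : ℤ) : qbinom n 0 = 1 := by
  rcases le_total 0 n with hn | hn
  · simp [qbinom_of_nonneg hn le_rfl, gauss_zero_right]
  · simp [qbinom_of_nonpos hn le_rfl, gauss_zero_right, T_zero]

theorem qbinom_zero_left {k : ℤ} (hk : 0 < k) : qbinom 0 k = 0 := by
  rw [qbinom_of_nonneg le_rfl hk.le, gauss_eq_zero_of_lt (by omega)]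

theorem qbinom_succ_succ (n : ℤ) {k : ℤ} (hk : 0 ≤ k) :
    qbinom (n + 1) (k + 1) = qbinom n k + T (k + 1) * qbinom n (k + 1) := by
  obtain ⟨b, rfl⟩ := Int.eq_ofNat_of_zero_le hk
  rcases le_or_gt 0 n with hn | hn
  · obtain ⟨a, rfl⟩ := Int.eq_ofNat_of_zero_le hn
    simp only [qbinom_of_nonneg, Int.toNat_natCast, hn, hk, add_nonneg, zero_le_one]
    exact_mod_cast gauss_succ_succ a b
  · obtain ⟨p, hp⟩ : ∃ p : ℕ, (b : ℤ) - n - 1 = p :=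
      ⟨_, (Int.toNat_of_nonneg (by omega)).symm⟩
    set e := (b : ℤ) * (2 * n - b + 1) / 2
    have he₁ : ((b : ℤ) + 1) * (2 * (n + 1) - (b + 1) + 1) / 2 = e + (n + 1) := by
      rw [← Int.add_mul_ediv_right _ _ two_ne_zero]; ring_nf
    have he₂ : ((b : ℤ) + 1) * (2 * n - (b + 1) + 1) / 2 = e + (n - b) := by
      rw [← Int.add_mul_ediv_right _ _ two_ne_zero]; ring_nf
    rw [qbinom_of_nonpos (by omega) (by omega), qbinom_of_nonpos hn.le (by omega),
      qbinom_of_nonpos hn.le (by omega), he₁, he₂,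
      show (b + 1 - (n + 1) - 1 : ℤ).toNat = p by omega,
      show ((b : ℤ) - n - 1).toNat = p by omega,
      show ((b : ℤ) + 1 - n - 1).toNat = p + 1 by omega,
      show ((b : ℤ) + 1).toNat = b + 1 by omega,
      Int.toNat_natCast, gauss_succ_succ', show (p : ℤ) - b = -(n + 1) by omega,
      T_add e, T_add e]
    have hinv : (T (n + 1) : ℤ[T;T⁻¹]) * T (-(n + 1)) = 1 := by
      rw [← T_add, add_neg_cancel, T_zero]
    have hb : (T ((b : ℤ) + 1) : ℤ[T;T⁻¹]) * T (n - b) = T (n + 1) := by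
      rw [← T_add]; ring_nf
    linear_combination (-1) ^ b * T e * gauss p b * hinv +
      (-1) ^ b * T e * (T (-(n + 1)) * gauss p b + gauss p (b + 1)) * hb

theorem eq_of_pascal_recurrence {R : Type*} [Ring R] {u : ℕ → R}
    (hu : ∀ k, IsLeftRegular (u k)) {F G : ℤ → ℕ → R}
    (hF : ∀ n k, F (n + 1) (k + 1) = F n k + u k * F n (k + 1))
    (hG : ∀ n k, G (n + 1) (k + 1) = G n k + u k * G n (k + 1))
    (h_zero_right : ∀ n, F n 0 = G n 0) (h_zero_left : ∀ k, F 0 k = G 0 k) : F = G := by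
  funext n k
  induction k generalizing n with
  | zero => exact h_zero_right n
  | succ k ih =>
    induction n using Int.induction_on with
    | zero => exact h_zero_left _
    | succ i hi => rw [hF, hG, ih, hi]
    | pred i hi =>
      have hF' := hF (-i - 1) k
      have hG' := hG (-i - 1) k
      rw [sub_add_cancel] at hF' hG'
      rw [hi, hG', ih] at hF'
      exact (hu k (add_left_cancel hF')).symm

noncomputable def chuSum (n m : ℤ) (k : ℕ) : ℤ[T;T⁻¹] :=
  ∑ j ∈ Finset.range (k + 1),
    T (((k : ℤ) - j) * (n - j)) * qbinom n j * qbinom m ((k : ℤ) - j)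

theorem chuSum_zero_right (n m : ℤ) : chuSum n m 0 = 1 := by
  simp [chuSum, qbinom_zero_right, T_zero]

theorem chuSum_zero_left (m : ℤ) (k : ℕ) : chuSum 0 m k = qbinom m k := by
  rw [chuSum, Finset.sum_range_succ', Finset.sum_eq_zero]
  · simp [qbinom_zero_right, T_zero]
  · intro j _
    rw [qbinom_zero_left (by omega), mul_zero, zero_mul]

theorem chuSum_succ_succ (n m : ℤ) (k : ℕ) :
    chuSum (n + 1) m (k + 1) = chuSum n m k + T ((k : ℤ) + 1) * chuSum n m (k + 1) := by
  unfold chuSum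
  rw [Finset.sum_range_succ' _ (k + 1), Finset.sum_range_succ' _ (k + 1), mul_add,
    Finset.mul_sum, ← add_assoc, ← Finset.sum_add_distrib]
  congr 1
  · refine Finset.sum_congr rfl fun j _ => ?_
    push_cast
    simp only [qbinom_succ_succ n j.cast_nonneg, add_sub_add_right_eq_sub]
    have hT : (T ((k : ℤ) + 1) : ℤ[T;T⁻¹]) * T ((k - j) * (n - (j + 1))) =
        T ((k - j) * (n - j)) * T ((j : ℤ) + 1) := by
      rw [← T_add, ← T_add]; ring_nf
    linear_combination -qbinom n (j + 1) * qbinom m (k - j) * hT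
  · push_cast
    simp only [qbinom_zero_right, sub_zero, mul_one, ← mul_assoc, ← T_add]
    ring_nf

theorem chuSum_eq_qbinom (n m : ℤ) (k : ℕ) : chuSum n m k = qbinom (n + m) k := by
  have h := eq_of_pascal_recurrence (u := fun k : ℕ ↦ T ((k : ℤ) + 1))
    (F := fun n k ↦ chuSum n m k) (G := fun n k ↦ qbinom (n + m) k)
    (fun k ↦ (isUnit_T _).isRegular.left) (chuSum_succ_succ · m)
    (fun n k ↦ by
      rw [add_right_comm]
      exact_mod_cast qbinom_succ_succ (n + m) k.cast_nonneg)
    (fun n ↦ by rw [chuSum_zero_right, Nat.cast_zero, qbinom_zero_right])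
    (fun k ↦ by rw [chuSum_zero_left, zero_add])
  exact congrFun (congrFun h n) k

theorem qbinom_chu_vandermonde (n m k : ℤ) (hk : 0 ≤ k) :
    ∑ j ∈ Finset.range (k.toNat + 1),
        T ((k - j) * (n - j)) * qbinom n j * qbinom m (k - j) =
      qbinom (n + m) k := by
  simpa only [chuSum, Int.toNat_of_nonneg hk] using chuSum_eq_qbinom n m k.toNat
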